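/- For every k ∈ ℕ, every depth-k local policy π, and every local state x ∈ X: ν^D_k(π)(x) ≤ Q̂_k(x, π(ε)). Consequently, for any nonnegative b0 : X → ℝ summing to 1 and any horizon h, the influence-optimistic Q-Dec-POMDP bound is at most the influence-optimistic Q-MMDP bound: sup_π Σ_x b0(x)·ν^D_h(π)(x) ≤ max_{a∈A} Σ_x b0(x)·Q̂_h(x,a). -/

import Mathlib

/-!
Induction on `k`. In the backup for a fixed influence value `u`, bound every subtree value
`ν^D_k(π↓o)(x')` by `max_{a'} Q̂_k(x', a')`; the summand then no longer depends on `o`, and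
`∑_o Ω(o|a,x') = 1` removes the observation, leaving exactly the Q-MMDP backup for the same `u`.
The belief-level bound follows by weighting the pointwise one
with `b0` and taking `a = π(ε)`.
-/

open Finset

section LocalModel

variable {Xl Xn A O U : Type*}
  [Fintype Xl] [Nonempty Xl] [Fintype Xn] [Nonempty Xn]
  [Fintype A] [Nonempty A] [Fintype O] [Nonempty O] [Fintype U] [Nonempty U]

/-- Influence-optimistic plan-time (Dec-POMDP) value vectors `ν^D_k(π)(x)`. A depth-`k`
local policy is a function `List O → A`; `π []` is its action at the empty history and
`fun h => π (o :: h)` is the subtree policy `π↓o`. -/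
noncomputable def nuD (Pl : Xl → (Xl × Xn) → A → ℝ) (Pn : Xn → (Xl × Xn) → A → U → ℝ)
    (Ω : O → A → (Xl × Xn) → ℝ) (r : A → (Xl × Xn) → ℝ) :
    ℕ → (List O → A) → (Xl × Xn) → ℝ
  | 0 => fun _ _ => 0
  | k + 1 => fun π x =>
      r (π []) x +
        Finset.univ.sup' Finset.univ_nonempty (fun u : U =>
          ∑ o : O, ∑ x' : Xl × Xn,
            Ω o (π []) x' * Pl x'.1 x (π []) * Pn x'.2 x (π []) u *
              nuD Pl Pn Ω r k (fun h => π (o :: h)) x')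

/-- Influence-optimistic Q-MMDP values `Q̂_k(x,a)` with reward `R(x,a,x') := r(a,x)`. -/
noncomputable def QhatR (Pl : Xl → (Xl × Xn) → A → ℝ) (Pn : Xn → (Xl × Xn) → A → U → ℝ)
    (r : A → (Xl × Xn) → ℝ) :
    ℕ → (Xl × Xn) → A → ℝ
  | 0 => fun _ _ => 0
  | k + 1 => fun x a =>
      r a x +
        Finset.univ.sup' Finset.univ_nonempty (fun u : U =>
          ∑ x' : Xl × Xn, Pl x'.1 x a * Pn x'.2 x a u *
            Finset.univ.sup' Finset.univ_nonempty (fun a' : A => QhatR Pl Pn r k x' a'))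

theorem sum_sum_kernel_mul_le {ι X : Type*} [Fintype ι] [Fintype X]
    (Ω : ι → X → ℝ) (w M : X → ℝ) (v : ι → X → ℝ)
    (hΩ0 : ∀ o x, 0 ≤ Ω o x) (hΩ1 : ∀ x, ∑ o, Ω o x = 1) (hw : ∀ x, 0 ≤ w x)
    (hv : ∀ o x, v o x ≤ M x) :
    ∑ o, ∑ x, Ω o x * w x * v o x ≤ ∑ x, w x * M x := calc
  ∑ o, ∑ x, Ω o x * w x * v o x ≤ ∑ o, ∑ x, Ω o x * (w x * M x) :=
    sum_le_sum fun o _ => sum_le_sum fun x _ => by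
      rw [mul_assoc]
      exact mul_le_mul_of_nonneg_left (mul_le_mul_of_nonneg_left (hv o x) (hw x)) (hΩ0 o x)
  _ = ∑ x, w x * M x := by
    rw [sum_comm]
    simp only [← sum_mul, hΩ1, one_mul]

theorem iSup_sum_mul_le_sup' {ι X A : Type*} [Nonempty ι] [Fintype X] [Fintype A] [Nonempty A]
    (b : X → ℝ) (f : ι → X → ℝ) (g : X → A → ℝ) (σ : ι → A)
    (hb : ∀ x, 0 ≤ b x) (hfg : ∀ i x, f i x ≤ g x (σ i)) :
    (⨆ i, ∑ x, b x * f i x) ≤ univ.sup' univ_nonempty fun a => ∑ x, b x * g x a :=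
  ciSup_le fun i =>
    (sum_le_sum fun x _ => mul_le_mul_of_nonneg_left (hfg i x) (hb x)).trans
      (le_sup' (fun a => ∑ x, b x * g x a) (mem_univ (σ i)))

omit [Nonempty Xl] [Nonempty Xn] [Nonempty O] in
theorem nuD_le_QhatR_first_action
    (Pl : Xl → (Xl × Xn) → A → ℝ) (Pn : Xn → (Xl × Xn) → A → U → ℝ)
    (Ω : O → A → (Xl × Xn) → ℝ) (r : A → (Xl × Xn) → ℝ)
    (hPl0 : ∀ x'l x a, 0 ≤ Pl x'l x a) (hPn0 : ∀ x'n x a u, 0 ≤ Pn x'n x a u)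
    (hΩ0 : ∀ o a x', 0 ≤ Ω o a x') (hΩ1 : ∀ a x', ∑ o : O, Ω o a x' = 1) :
    ∀ (k : ℕ) (π : List O → A) (x : Xl × Xn),
      nuD Pl Pn Ω r k π x ≤ QhatR Pl Pn r k x (π []) := by
  intro k
  induction k with
  | zero => simp [nuD, QhatR]
  | succ k ih =>
    intro π x
    refine add_le_add_right (sup'_le _ _ fun u _ => le_trans ?_ (le_sup' _ (mem_univ u))) _
    simpa only [mul_assoc] using
      sum_sum_kernel_mul_le (fun o => Ω o (π [])) (fun x' => Pl x'.1 x (π []) * Pn x'.2 x (π []) u)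
        (fun x' => univ.sup' univ_nonempty (QhatR Pl Pn r k x'))
        (fun o => nuD Pl Pn Ω r k (fun h => π (o :: h)))
        (fun o => hΩ0 o _) (hΩ1 _) (fun x' => mul_nonneg (hPl0 _ _ _) (hPn0 _ _ _ _))
        (fun o x' => (ih _ x').trans (le_sup' _ (mem_univ _)))

theorem nuD_le_QhatR_general
    (Pl : Xl → (Xl × Xn) → A → ℝ) (Pn : Xn → (Xl × Xn) → A → U → ℝ)
    (Ω : O → A → (Xl × Xn) → ℝ) (r : A → (Xl × Xn) → ℝ)
    (hPl0 : ∀ x'l x a, 0 ≤ Pl x'l x a)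
    (hPn0 : ∀ x'n x a u, 0 ≤ Pn x'n x a u)
    (hΩ0 : ∀ o a x', 0 ≤ Ω o a x') (hΩ1 : ∀ a x', ∑ o : O, Ω o a x' = 1) :
    (∀ (k : ℕ) (π : List O → A) (x : Xl × Xn),
        nuD Pl Pn Ω r k π x ≤ QhatR Pl Pn r k x (π [])) ∧
      ∀ (b0 : Xl × Xn → ℝ), (∀ x, 0 ≤ b0 x) → (∑ x : Xl × Xn, b0 x = 1) → ∀ h : ℕ,
        (⨆ π : List O → A, ∑ x : Xl × Xn, b0 x * nuD Pl Pn Ω r h π x) ≤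
          Finset.univ.sup' Finset.univ_nonempty
            (fun a : A => ∑ x : Xl × Xn, b0 x * QhatR Pl Pn r h x a) := by
  have hν := nuD_le_QhatR_first_action Pl Pn Ω r hPl0 hPn0 hΩ0 hΩ1
  exact ⟨hν, fun b0 hb0 _ h => iSup_sum_mul_le_sup' b0 _ _ (fun π => π []) hb0 (hν h)⟩

/-- the influence-optimistic plan-time (Dec-POMDP) vectors are pointwise
at most the influence-optimistic Q-MMDP values at the policy's first action;
consequently the IO-Q-Dec-POMDP bound is at most the IO-Q-MMDP bound for any initial
belief and horizon. -/
theorem nuD_le_QhatR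
    (Pl : Xl → (Xl × Xn) → A → ℝ) (Pn : Xn → (Xl × Xn) → A → U → ℝ)
    (Ω : O → A → (Xl × Xn) → ℝ) (r : A → (Xl × Xn) → ℝ)
    (hPl0 : ∀ x'l x a, 0 ≤ Pl x'l x a) (hPl1 : ∀ x a, ∑ x'l : Xl, Pl x'l x a = 1)
    (hPn0 : ∀ x'n x a u, 0 ≤ Pn x'n x a u) (hPn1 : ∀ x a u, ∑ x'n : Xn, Pn x'n x a u = 1)
    (hΩ0 : ∀ o a x', 0 ≤ Ω o a x') (hΩ1 : ∀ a x', ∑ o : O, Ω o a x' = 1) :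
    (∀ (k : ℕ) (π : List O → A) (x : Xl × Xn),
        nuD Pl Pn Ω r k π x ≤ QhatR Pl Pn r k x (π [])) ∧
      ∀ (b0 : Xl × Xn → ℝ), (∀ x, 0 ≤ b0 x) → (∑ x : Xl × Xn, b0 x = 1) → ∀ h : ℕ,
        (⨆ π : List O → A, ∑ x : Xl × Xn, b0 x * nuD Pl Pn Ω r h π x) ≤
          Finset.univ.sup' Finset.univ_nonempty
            (fun a : A => ∑ x : Xl × Xn, b0 x * QhatR Pl Pn r h x a) :=
  nuD_le_QhatR_general Pl Pn Ω r hPl0 hPn0 hΩ0 hΩ1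

end LocalModel
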